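/- Let c = (F, V, I) be a chain where F = F₁,…,F_ℓ is a vertex-separated loose path of copies of F starting at the k-set I, I ⊆ V ⊆ V(F₁+…+F_ℓ), and let C := (F₁+…+F_ℓ)[V] be the associated chain hypergraph. Then for every subtemplate (A, I) ⊆ (C, I), one has ρ_{A,I} ≤ ρ_F, where ρ_F is the k-density of F and (F, f) is assumed balanced for every edge f of F. -/
import Mathlib


open Finset

/-- The vertex set (support) of a hypergraph given by its edge set. -/
def verts (A : Finset (Finset ℕ)) : Finset ℕ := A.sup id

/-- The edge set of the induced subhypergraph `A[U]`. -/
def ind (A : Finset (Finset ℕ)) (U : Finset ℕ) : Finset (Finset ℕ) := A.filter (· ⊆ U)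

/-- The density of the template `(A[U], I)`, where `A[U]` carries the vertex set `U`:
`(e(A[U]) - e(A[I])) / (|U| - |I|)`, and `0` if `U = I`. -/
def dens (A : Finset (Finset ℕ)) (U I : Finset ℕ) : ℚ :=
  if U = I then 0
  else (((ind A U).card : ℚ) - ((ind A I).card : ℚ)) / ((U.card : ℚ) - (I.card : ℚ))

/-- The density `ρ_{A,I}` of the template `(A, I)` (whose vertex set is `verts A ∪ I`). -/
def tdens (A : Finset (Finset ℕ)) (I : Finset ℕ) : ℚ := dens A (verts A ∪ I) I

/-- The `k`-density `ρ_A = (e(A) - 1)/(v(A) - k)` of a `k`-uniform hypergraph. -/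
def kdens (k : ℕ) (A : Finset (Finset ℕ)) : ℚ :=
  ((A.card : ℚ) - 1) / (((verts A).card : ℚ) - (k : ℚ))

/-- The template `(A, I)` is strictly balanced: every proper subtemplate `(B, I) ⊆ (A, I)`
(`B = A[U]` with vertex set `U`, `I ⊆ U`, `V(B) = U ≠ I`, `B ≠ A`) has strictly smaller
density. -/
def StrictBalT (A : Finset (Finset ℕ)) (I : Finset ℕ) : Prop :=
  ∀ U : Finset ℕ, I ⊆ U → U ⊂ verts A ∪ I → U ≠ I → dens A U I < tdens A I

/-- The union of the hypergraphs `B j` over `j ∈ s`. -/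
def pUnion (B : ℕ → Finset (Finset ℕ)) (s : Finset ℕ) : Finset (Finset ℕ) := s.biUnion B

/-- `qfun B i = 1 + ∑_{j < i} (|B j| - 1)`. -/
def qfun (B : ℕ → Finset (Finset ℕ)) (i : ℕ) : ℕ :=
  1 + ∑ j ∈ Finset.range i, ((B j).card - 1)

/-- `B 0, …, B (n-1)` is a vertex-separated loose path starting at `I`: there is an
enumeration `e 0, …, e (qfun B n - 1)` of the edges of `B 0 + … + B (n-1)` with `e 0 = I`,
each `B i` consisting of the block of edges with indices in `[qfun B i - 1, qfun B (i+1) - 1]`,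
such that for each `0 < i < n` the vertex sets of `B 0 + … + B (i-1)` and of
`B i + … + B (n-1)` intersect exactly in the shared edge `e (qfun B i - 1)`. -/
def IsVSLoosePath (n : ℕ) (B : ℕ → Finset (Finset ℕ)) (I : Finset ℕ) : Prop :=
  ∃ e : ℕ → Finset ℕ,
    (∀ i < qfun B n, ∀ j < qfun B n, e i = e j → i = j) ∧
    e 0 = I ∧
    (∀ i < n, B i =
      ((Finset.range (qfun B n)).filter
          (fun j => qfun B i - 1 ≤ j ∧ j ≤ qfun B (i + 1) - 1)).image e) ∧
    (∀ i, 0 < i → i < n →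
      verts (pUnion B (Finset.range i)) ∩
          verts (pUnion B ((Finset.range n).filter (fun j => i ≤ j))) =
        e (qfun B i - 1))

/-- `B'` is a copy of `F`. -/
def IsCopy (F B' : Finset (Finset ℕ)) : Prop :=
  ∃ φ : ℕ → ℕ, Set.InjOn φ ↑(verts F) ∧ B' = F.image (fun f => f.image φ)

lemma mem_verts' {A : Finset (Finset ℕ)} {x : ℕ} : x ∈ verts A ↔ ∃ e ∈ A, x ∈ e := by
  simp [verts, Finset.mem_sup]

lemma subset_verts {A : Finset (Finset ℕ)} {f : Finset ℕ} (hf : f ∈ A) : f ⊆ verts A :=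
  Finset.le_sup (f := id) hf

lemma verts_mono {A B : Finset (Finset ℕ)} (h : A ⊆ B) : verts A ⊆ verts B :=
  Finset.le_iff_subset.mp (Finset.sup_mono h)

lemma verts_union {A B : Finset (Finset ℕ)} : verts (A ∪ B) = verts A ∪ verts B :=
  Finset.sup_union

lemma verts_image {S : Finset (Finset ℕ)} {φ : ℕ → ℕ} :
    verts (S.image (fun g => g.image φ)) = (verts S).image φ := by
  ext x
  simp only [mem_verts', Finset.mem_image]
  constructor
  · rintro ⟨e, ⟨g, hg, rfl⟩, hx⟩
    obtain ⟨a, ha, rfl⟩ := Finset.mem_image.1 hx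
    exact ⟨a, ⟨g, hg, ha⟩, rfl⟩
  · rintro ⟨a, ha, rfl⟩
    obtain ⟨g, hg, hag⟩ := ha
    exact ⟨g.image φ, ⟨g, hg, rfl⟩, Finset.mem_image_of_mem φ hag⟩

lemma copy_bound (k : ℕ) (F : Finset (Finset ℕ)) (hFk : ∀ e ∈ F, e.card = k)
    (hbal : ∀ f ∈ F, ∀ B' ⊆ F, tdens B' f ≤ kdens k F)
    (D : Finset (Finset ℕ)) (hD : IsCopy F D)
    (X : Finset (Finset ℕ)) (hX : X ⊆ D) (f : Finset ℕ) (hf : f ∈ D) :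
    ((X.card : ℚ)) - ((ind X f).card : ℚ) ≤ kdens k F * (((verts X ∪ f).card : ℚ) - k) := by
  obtain ⟨φ, hφ, rfl⟩ := hD
  -- images of subsets of verts F
  have himg : ∀ {g g' : Finset ℕ}, g ⊆ verts F → g' ⊆ verts F →
      (g.image φ ⊆ g'.image φ ↔ g ⊆ g') := by
    intro g g' hg hg'
    constructor
    · intro h a ha
      have : φ a ∈ g'.image φ := h (Finset.mem_image_of_mem φ ha)
      obtain ⟨b, hb, hba⟩ := Finset.mem_image.1 this
      have : b = a := hφ (by exact_mod_cast hg' hb) (by exact_mod_cast hg ha) hba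
      exact this ▸ hb
    · exact fun h => Finset.image_subset_image h
  have hsubV : ∀ g ∈ F, g ⊆ verts F := fun g hg => subset_verts hg
  obtain ⟨g₀, hg₀F, hfg₀⟩ := Finset.mem_image.1 hf
  set B' : Finset (Finset ℕ) := F.filter (fun g => g.image φ ∈ X) with hB'
  have hB'sub : B' ⊆ F := Finset.filter_subset _ _
  have hinjF : Set.InjOn (fun g : Finset ℕ => g.image φ) ↑F := by
    intro g hg g' hg' h
    have h1 : g ⊆ g' := (himg (hsubV g hg) (hsubV g' hg')).1 (le_of_eq h)
    have h2 : g' ⊆ g := (himg (hsubV g' hg') (hsubV g hg)).1 (le_of_eq h.symm)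
    exact Finset.Subset.antisymm h1 h2
  have him : B'.image (fun g => g.image φ) = X := by
    apply Finset.Subset.antisymm
    · intro x hx
      obtain ⟨g, hg, rfl⟩ := Finset.mem_image.1 hx
      exact (Finset.mem_filter.1 hg).2
    · intro x hx
      obtain ⟨g, hg, rfl⟩ := Finset.mem_image.1 (hX hx)
      exact Finset.mem_image_of_mem _ (Finset.mem_filter.2 ⟨hg, hx⟩)
  have hcardX : X.card = B'.card := by
    rw [← him]
    exact Finset.card_image_of_injOn (hinjF.mono (by exact_mod_cast hB'sub))
  have hind : ind X f = (ind B' g₀).image (fun g => g.image φ) := by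
    ext x
    simp only [ind, Finset.mem_filter, Finset.mem_image, ← him]
    constructor
    · rintro ⟨⟨g, hg, rfl⟩, hxf⟩
      rw [← hfg₀] at hxf
      exact ⟨g, ⟨hg, (himg (hsubV g (hB'sub hg)) (hsubV g₀ hg₀F)).1 hxf⟩, rfl⟩
    · rintro ⟨g, ⟨hg, hgg₀⟩, rfl⟩
      have h2 := (himg (hsubV g (hB'sub hg)) (hsubV g₀ hg₀F)).2 hgg₀
      rw [hfg₀] at h2
      exact ⟨⟨g, hg, rfl⟩, h2⟩
  have hcardind : (ind X f).card = (ind B' g₀).card := by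
    rw [hind]
    have hindsub : ind B' g₀ ⊆ B' := Finset.filter_subset _ _
    exact Finset.card_image_of_injOn (hinjF.mono (by exact_mod_cast hindsub.trans hB'sub))
  have hvertsB' : verts B' ⊆ verts F := verts_mono hB'sub
  have hU : verts X ∪ f = (verts B' ∪ g₀).image φ := by
    rw [← him, verts_image, ← hfg₀, Finset.image_union]
  have hcardU : (verts X ∪ f).card = (verts B' ∪ g₀).card := by
    rw [hU]
    apply Finset.card_image_of_injOn
    apply hφ.mono
    intro a ha
    rcases Finset.mem_union.1 (by exact_mod_cast ha) with h | h
    · exact_mod_cast hvertsB' h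
    · exact_mod_cast hsubV g₀ hg₀F h
  have hg₀k : g₀.card = k := hFk g₀ hg₀F
  have ht := hbal g₀ hg₀F B' hB'sub
  rw [hcardX, hcardind, hcardU]
  unfold tdens _root_.dens at ht
  by_cases hcase : verts B' ∪ g₀ = g₀
  · -- degenerate: all of B' inside g₀
    have hindB' : ind B' g₀ = B' := by
      apply Finset.filter_true_of_mem
      intro x hx
      have hsub : verts B' ⊆ g₀ := by
        rw [← hcase]; exact Finset.subset_union_left
      exact (subset_verts hx).trans hsub
    rw [hcase, hindB', hg₀k]
    simp
  · rw [if_neg hcase] at ht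
    have hindU : ind B' (verts B' ∪ g₀) = B' := by
      apply Finset.filter_true_of_mem
      intro x hx
      exact (subset_verts hx).trans Finset.subset_union_left
    rw [hindU, hg₀k] at ht
    have hklt : k < (verts B' ∪ g₀).card := by
      by_contra h
      push_neg at h
      exact hcase (Finset.eq_of_subset_of_card_le Finset.subset_union_right (by omega)).symm
    have hpos : (0 : ℚ) < ((verts B' ∪ g₀).card : ℚ) - k := by
      have : (k : ℚ) < ((verts B' ∪ g₀).card : ℚ) := by exact_mod_cast hklt
      linarith
    rw [div_le_iff₀ hpos] at ht
    linarith

/-- for a chain `(F₁,…,F_ℓ, V, I)` with chain hypergraph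
`C = (F₁+…+F_ℓ)[V]`, every subtemplate `(A, I) ⊆ (C, I)` satisfies `ρ_{A,I} ≤ ρ_F`. -/
theorem chain_subtemplate_density
    (k : ℕ) (hk : 2 ≤ k)
    (F : Finset (Finset ℕ)) (hFk : ∀ e ∈ F, e.card = k) (hF2 : 2 ≤ F.card)
    (hbal : ∀ f ∈ F, ∀ B' ⊆ F, tdens B' f ≤ kdens k F)
    (n : ℕ) (B : ℕ → Finset (Finset ℕ)) (I0 : Finset ℕ) (hI0 : I0.card = k)
    (hpath : IsVSLoosePath n B I0) (hcopy : ∀ i < n, IsCopy F (B i))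
    (V : Finset ℕ) (hIV : I0 ⊆ V) (hVsub : V ⊆ verts (pUnion B (Finset.range n)))
    (C : Finset (Finset ℕ)) (hC : C = ind (pUnion B (Finset.range n)) V) :
    ∀ A ⊆ C, tdens A I0 ≤ kdens k F := by
  intro A hA
  obtain ⟨e, hinj, he0, hblock, hsep⟩ := hpath
  have hFne : F.Nonempty := Finset.card_pos.1 (by omega)
  obtain ⟨f₀, hf₀⟩ := hFne
  have hρ0 : (0 : ℚ) ≤ kdens k F := by
    have h := hbal f₀ hf₀ ∅ (Finset.empty_subset F)
    simpa [tdens, _root_.dens, verts] using h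
  -- basic facts about qfun
  have hq1 : ∀ i, 1 ≤ qfun B i := fun i => Nat.le_add_right 1 _
  have hqmono : ∀ i j, i ≤ j → qfun B i ≤ qfun B j := by
    intro i j h
    exact Nat.add_le_add_left
      (Finset.sum_le_sum_of_subset (Finset.range_subset_range.2 h)) 1
  have hqn : ∀ i, i ≤ n → qfun B i - 1 < qfun B n := by
    intro i h
    have h1 := hqmono i n h
    have h2 := hq1 i
    omega
  -- the linking edges
  set fs : ℕ → Finset ℕ := fun i => e (qfun B i - 1) with hfs
  have hfs0 : fs 0 = I0 := by
    simp only [hfs, qfun, Finset.range_zero, Finset.sum_empty]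
    simpa using he0
  have hfsB_self : ∀ i < n, fs i ∈ B i := by
    intro i hi
    rw [hblock i hi]
    refine Finset.mem_image_of_mem e (Finset.mem_filter.2 ⟨Finset.mem_range.2 (hqn i hi.le), le_refl _, ?_⟩)
    exact Nat.sub_le_sub_right (hqmono i (i + 1) (Nat.le_succ i)) 1
  have hfsB_prev : ∀ j, j + 1 < n → fs (j + 1) ∈ B j := by
    intro j hj
    rw [hblock j (by omega)]
    refine Finset.mem_image_of_mem e (Finset.mem_filter.2 ⟨Finset.mem_range.2 (hqn (j+1) hj.le), ?_, le_refl _⟩)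
    exact Nat.sub_le_sub_right (hqmono j (j + 1) (Nat.le_succ j)) 1
  -- edges of copies have card k
  have hBk : ∀ i < n, ∀ x ∈ B i, x.card = k := by
    intro i hi x hx
    obtain ⟨φ, hφ, hBi⟩ := hcopy i hi
    rw [hBi] at hx
    obtain ⟨g, hg, rfl⟩ := Finset.mem_image.1 hx
    rw [Finset.card_image_of_injOn (hφ.mono (by exact_mod_cast subset_verts hg))]
    exact hFk g hg
  have hPmem : ∀ (i : ℕ) (x : Finset ℕ), x ∈ pUnion B (Finset.range i) ↔ ∃ j < i, x ∈ B j := by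
    intro i x
    simp [pUnion, Finset.mem_biUnion]
  -- main induction
  have claim : ∀ i, i ≤ n →
      ((A ∩ pUnion B (Finset.range i)).card : ℚ) -
          ((ind (A ∩ pUnion B (Finset.range i)) I0).card : ℚ) ≤
        kdens k F * (((verts (A ∩ pUnion B (Finset.range i)) ∪ I0).card : ℚ) - k) := by
    intro i
    induction i with
    | zero =>
      intro _
      simp [pUnion, ind, verts, hI0]
    | succ i IH =>
      intro h
      have hi_lt : i < n := h
      have IH' := IH (le_of_lt hi_lt)
      set Pi := pUnion B (Finset.range i) with hPi
      set Pi1 := pUnion B (Finset.range (i + 1)) with hPi1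
      have hPsucc : Pi1 = B i ∪ Pi := by
        simp only [hPi1, hPi, pUnion, Finset.range_add_one, Finset.biUnion_insert]
      set X := A ∩ B i with hX
      have hAsplit : A ∩ Pi1 = X ∪ (A ∩ Pi) := by
        rw [hPsucc, Finset.inter_union_distrib_left]
      have hXsub : X ⊆ B i := Finset.inter_subset_right
      have hfsi : fs i ∈ B i := hfsB_self i hi_lt
      have KC := copy_bound k F hFk hbal (B i) (hcopy i hi_lt) X hXsub (fs i) hfsi
      -- edge counting
      have hcard_split : (A ∩ Pi1).card = (X \ (A ∩ Pi)).card + (A ∩ Pi).card := by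
        rw [hAsplit]
        exact (Finset.card_sdiff_add_card X (A ∩ Pi)).symm
      -- vertex counting
      have hW : verts (A ∩ Pi1) ∪ I0 = (verts X \ (verts (A ∩ Pi) ∪ I0)) ∪ (verts (A ∩ Pi) ∪ I0) := by
        rw [hAsplit, verts_union]
        ext x
        simp only [Finset.mem_union, Finset.mem_sdiff]
        tauto
      have hWdisj : Disjoint (verts X \ (verts (A ∩ Pi) ∪ I0)) (verts (A ∩ Pi) ∪ I0) :=
        Finset.sdiff_disjoint
      have hWcard : (verts (A ∩ Pi1) ∪ I0).card =
          (verts X \ (verts (A ∩ Pi) ∪ I0)).card + (verts (A ∩ Pi) ∪ I0).card := by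
        rw [hW, Finset.card_union_of_disjoint hWdisj]
      have hεmono : ind (A ∩ Pi) I0 ⊆ ind (A ∩ Pi1) I0 := by
        apply Finset.filter_subset_filter
        rw [hAsplit]
        exact Finset.subset_union_right
      have hP0 : i = 0 → Pi = ∅ := by
        intro hi0; simp [hPi, hi0, pUnion]
      rcases Nat.eq_zero_or_pos i with hi0 | hipos
      · -- first copy
        subst hi0
        have hXA : A ∩ Pi1 = X := by
          rw [hPsucc, hP0 rfl, Finset.union_empty, hX]
        rw [hXA]
        rw [hfs0] at KC
        exact KC
      · -- later copies: i = j + 1 ≥ 1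
        -- linking edge is old
        have hfsiP : fs i ∈ Pi := by
          obtain ⟨j, rfl⟩ : ∃ j, i = j + 1 := ⟨i - 1, by omega⟩
          exact (hPmem (j+1) (fs (j+1))).2 ⟨j, by omega, hfsB_prev j hi_lt⟩
        have hfsik : (fs i).card = k := hBk i hi_lt (fs i) hfsi
        -- edges of X inside fs i are old edges
        have hindsub : ind X (fs i) ⊆ X ∩ (A ∩ Pi) := by
          intro x hx
          have hx1 : x ∈ X := Finset.mem_of_mem_filter x hx
          have hx2 : x ⊆ fs i := (Finset.mem_filter.1 hx).2
          have hxk : x.card = k := hBk i hi_lt x (hXsub hx1)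
          have hxeq : x = fs i := Finset.eq_of_subset_of_card_le hx2 (by omega)
          refine Finset.mem_inter.2 ⟨hx1, Finset.mem_inter.2 ⟨Finset.mem_inter.1 hx1 |>.1, ?_⟩⟩
          rw [hxeq]; exact hfsiP
        have hE : (X \ (A ∩ Pi)).card + (ind X (fs i)).card ≤ X.card := by
          have h1 := Finset.card_inter_add_card_sdiff X (A ∩ Pi)
          have h2 : (ind X (fs i)).card ≤ (X ∩ (A ∩ Pi)).card :=
            Finset.card_le_card hindsub
          clear_value X Pi Pi1
          omega
        -- separation: new vertices of X avoid old vertices except fs i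
        have hsepi := hsep i hipos hi_lt
        have hI0B0 : I0 ∈ B 0 := by
          rw [hblock 0 (by omega), ← he0]
          refine Finset.mem_image_of_mem e (Finset.mem_filter.2 ⟨Finset.mem_range.2 ?_, ?_, ?_⟩)
          · have := hq1 n; omega
          · have h0 : qfun B 0 = 1 := by simp [qfun]
            omega
          · exact Nat.zero_le _
        have hI0P : I0 ⊆ verts Pi := by
          have hB0P : B 0 ⊆ Pi := fun x hx => (hPmem i x).2 ⟨0, hipos, hx⟩
          exact (subset_verts hI0B0).trans (verts_mono hB0P)
        have hXright : verts X ⊆ verts (pUnion B ((Finset.range n).filter (fun j => i ≤ j))) := by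
          apply verts_mono
          intro x hx
          refine Finset.mem_biUnion.2 ⟨i, Finset.mem_filter.2 ⟨Finset.mem_range.2 hi_lt, le_refl i⟩, (Finset.mem_inter.1 hx).2⟩
        have hsepi' : verts (pUnion B (Finset.range i)) ∩
            verts (pUnion B ((Finset.range n).filter (fun j => i ≤ j))) = fs i := hsepi
        have hsep' : verts X ∩ (verts (A ∩ Pi) ∪ I0) ⊆ fs i := by
          intro x hx
          obtain ⟨hx1, hx2⟩ := Finset.mem_inter.1 hx
          rw [← hsepi']
          refine Finset.mem_inter.2 ⟨?_, hXright hx1⟩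
          rcases Finset.mem_union.1 hx2 with h' | h'
          · exact verts_mono Finset.inter_subset_right h'
          · exact hI0P h'
        have hVsub' : verts X \ fs i ⊆ verts X \ (verts (A ∩ Pi) ∪ I0) := by
          intro x hx
          obtain ⟨hx1, hx2⟩ := Finset.mem_sdiff.1 hx
          refine Finset.mem_sdiff.2 ⟨hx1, fun hmem => hx2 (hsep' (Finset.mem_inter.2 ⟨hx1, hmem⟩))⟩
        have hU5 : (verts X ∪ fs i).card = (verts X \ fs i).card + k := by
          rw [← hfsik]
          exact (Finset.card_sdiff_add_card (verts X) (fs i)).symm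
        have hVle : (verts X \ fs i).card ≤ (verts X \ (verts (A ∩ Pi) ∪ I0)).card :=
          Finset.card_le_card hVsub'
        -- now combine over ℚ
        have hεle : ((ind (A ∩ Pi) I0).card : ℚ) ≤ ((ind (A ∩ Pi1) I0).card : ℚ) := by
          exact_mod_cast Finset.card_le_card hεmono
        have hcs : ((A ∩ Pi1).card : ℚ) = ((X \ (A ∩ Pi)).card : ℚ) + ((A ∩ Pi).card : ℚ) := by
          exact_mod_cast hcard_split
        have hwc : ((verts (A ∩ Pi1) ∪ I0).card : ℚ) =
            ((verts X \ (verts (A ∩ Pi) ∪ I0)).card : ℚ) + ((verts (A ∩ Pi) ∪ I0).card : ℚ) := by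
          exact_mod_cast hWcard
        have hEq : ((X \ (A ∩ Pi)).card : ℚ) + ((ind X (fs i)).card : ℚ) ≤ (X.card : ℚ) := by
          exact_mod_cast hE
        have hUq : ((verts X ∪ fs i).card : ℚ) = ((verts X \ fs i).card : ℚ) + k := by
          exact_mod_cast hU5
        have hVleq : ((verts X \ fs i).card : ℚ) ≤ ((verts X \ (verts (A ∩ Pi) ∪ I0)).card : ℚ) := by
          exact_mod_cast hVle
        have hmul : kdens k F * (((verts X ∪ fs i).card : ℚ) - k) ≤
            kdens k F * ((verts X \ (verts (A ∩ Pi) ∪ I0)).card : ℚ) := by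
          apply mul_le_mul_of_nonneg_left _ hρ0
          rw [hUq]
          linarith
        have hdist : kdens k F * (((verts (A ∩ Pi1) ∪ I0).card : ℚ) - k) =
            kdens k F * ((verts X \ (verts (A ∩ Pi) ∪ I0)).card : ℚ) +
              kdens k F * (((verts (A ∩ Pi) ∪ I0).card : ℚ) - k) := by
          rw [hwc]; ring
        rw [hdist]
        linarith
  -- conclude
  have hCP : C ⊆ pUnion B (Finset.range n) := by
    rw [hC]; exact Finset.filter_subset _ _
  have hAP : A ∩ pUnion B (Finset.range n) = A :=
    Finset.inter_eq_left.2 (hA.trans hCP)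
  have hfinal := claim n (le_refl n)
  rw [hAP] at hfinal
  unfold tdens _root_.dens
  split_ifs with hcase
  · exact hρ0
  · have hindA : ind A (verts A ∪ I0) = A := by
      apply Finset.filter_true_of_mem
      intro x hx
      exact (subset_verts hx).trans Finset.subset_union_left
    have hklt : k < (verts A ∪ I0).card := by
      by_contra hcon
      push_neg at hcon
      exact hcase (Finset.eq_of_subset_of_card_le Finset.subset_union_right (by omega)).symm
    have hpos : (0 : ℚ) < ((verts A ∪ I0).card : ℚ) - (I0.card : ℚ) := by
      rw [hI0]
      have : (k : ℚ) < ((verts A ∪ I0).card : ℚ) := by exact_mod_cast hklt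
      linarith
    rw [hindA, div_le_iff₀ hpos, hI0]
    linarith
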